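/- Stability of vanishing of spectral projections (classical content of the paper's Lemma on continuity of the spectrum map): let G be a compact topological group with Haar probability measure μ, A a unital C*-algebra, and χ : G → 𝕋 a continuous character. If U and U' are norm-continuous representations of G in A with sup_{g ∈ G} ‖U(g) − U'(g)‖ < 1, then P_χ(U) = 0 if and only if P_χ(U') = 0. -/

import Mathlib

/-!
Left invariance of Haar measure gives `U h * P = χ h • P` for `P = P_χ(U)`, hence
`star P * P = star P` and `P` is a self-adjoint idempotent. By the C*-identity `‖P‖ = ‖P‖²`,
so `‖P‖ ∈ {0, 1}`. Since `‖P_χ(U) - P_χ(U')‖ ≤ sup ‖U g - U' g‖ < 1`, if one projection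
vanishes the other has norm `< 1`, hence vanishes as well.
-/

open MeasureTheory

theorem IsStarProjection.of_star_mul_self_eq {R : Type*} [Mul R] [StarMul R] {p : R}
    (h : star p * p = p) : IsStarProjection p := by
  have hsa : star p = p := by
    conv_lhs => rw [← h]
    rw [star_mul, star_star, h]
  exact ⟨by rwa [hsa] at h, hsa⟩

namespace IsStarProjection

variable {E : Type*} [NonUnitalNormedRing E] [StarRing E] [CStarRing E] {p q : E}

theorem eq_zero_of_norm_lt_one (hp : IsStarProjection p) (h : ‖p‖ < 1) : p = 0 := by
  have hsq : IsIdempotentElem ‖p‖ := by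
    rw [IsIdempotentElem, ← CStarRing.norm_star_mul_self, hp.isSelfAdjoint.star_eq,
      hp.isIdempotentElem.eq]
  exact norm_eq_zero.mp <| (IsIdempotentElem.iff_eq_zero_or_one.mp hsq).resolve_right h.ne

theorem eq_zero_iff_of_norm_sub_lt_one (hp : IsStarProjection p) (hq : IsStarProjection q)
    (h : ‖p - q‖ < 1) : p = 0 ↔ q = 0 := by
  constructor
  · rintro rfl
    exact hq.eq_zero_of_norm_lt_one (by rwa [zero_sub, norm_neg] at h)
  · rintro rfl
    exact hp.eq_zero_of_norm_lt_one (by rwa [sub_zero] at h)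

end IsStarProjection

theorem integrable_inv_character_smul {G : Type*} [Group G] [TopologicalSpace G]
    [CompactSpace G] [MeasurableSpace G] [OpensMeasurableSpace G] (μ : Measure G)
    [IsFiniteMeasure μ] (χ : ContinuousMonoidHom G Circle) {E : Type*} [NormedAddCommGroup E]
    [NormedSpace ℂ E] {f : G → E} (hf : Continuous f) :
    Integrable (fun g => (((χ g)⁻¹ : Circle) : ℂ) • f g) μ :=
  ((continuous_subtype_val.comp χ.continuous.inv).smul hf).integrable_of_hasCompactSupport
    (HasCompactSupport.of_compactSpace _)

section SpectralProjection

variable {G : Type*} [Group G] [TopologicalSpace G] [CompactSpace G]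
  [MeasurableSpace G] [OpensMeasurableSpace G]
  {A : Type*} [NormedRing A] [StarRing A] [NormedAlgebra ℂ A]
  (μ : Measure G) (χ : ContinuousMonoidHom G Circle)

noncomputable def spectralProjection (U : G →* unitary A) : A :=
  ∫ g, (((χ g)⁻¹ : Circle) : ℂ) • (U g : A) ∂μ

variable {U V : G →* unitary A}

theorem unitary_mul_spectralProjection [MeasurableMul G] [IsFiniteMeasure μ]
    [μ.IsMulLeftInvariant] (hU : Continuous fun g => (U g : A)) (h : G) :
    (U h : A) * spectralProjection μ χ U = ((χ h : Circle) : ℂ) • spectralProjection μ χ U := by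
  have translate (g : G) : (U h : A) * ((((χ (h⁻¹ * g))⁻¹ : Circle) : ℂ) • (U (h⁻¹ * g) : A)) =
      ((χ h : Circle) : ℂ) • ((((χ g)⁻¹ : Circle) : ℂ) • (U g : A)) := by
    have hχ : (χ (h⁻¹ * g))⁻¹ = χ h * (χ g)⁻¹ := by rw [map_mul, map_inv, mul_inv, inv_inv]
    rw [mul_smul_comm, ← Submonoid.coe_mul, ← map_mul, mul_inv_cancel_left, hχ, Circle.coe_mul,
      smul_smul]
  rw [spectralProjection, ← integral_const_mul_of_integrable (integrable_inv_character_smul μ χ hU),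
    ← integral_smul, ← integral_mul_left_eq_self _ h⁻¹]
  simp only [translate]

theorem isStarProjection_spectralProjection [MeasurableMul G] [IsProbabilityMeasure μ]
    [μ.IsMulLeftInvariant] [CompleteSpace A] [StarModule ℂ A]
    (hU : Continuous fun g => (U g : A)) : IsStarProjection (spectralProjection μ χ U) := by
  set P := spectralProjection μ χ U
  have star_mul_unitary (g : G) : star P * (U g : A) = ((χ g : Circle) : ℂ) • star P := by
    have := congrArg star (unitary_mul_spectralProjection μ χ hU g⁻¹)
    have star_coe (z : Circle) : star (z : ℂ) = ↑z⁻¹ := (Circle.coe_inv_eq_conj z).symm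
    rwa [star_mul, star_smul, ← Unitary.coe_star, Unitary.star_eq_inv, ← map_inv, inv_inv,
      star_coe, map_inv, inv_inv] at this
  have star_mul_self : star P * P = star P :=
    calc star P * P = ∫ g, star P * ((((χ g)⁻¹ : Circle) : ℂ) • (U g : A)) ∂μ :=
          (integral_const_mul_of_integrable (integrable_inv_character_smul μ χ hU)).symm
      _ = ∫ _, star P ∂μ := by
          congr 1 with g
          rw [mul_smul_comm, star_mul_unitary, smul_smul, ← Circle.coe_mul, inv_mul_cancel,
            Circle.coe_one, one_smul]
      _ = star P := by simp
  refine .of_star_mul_self_eq ?_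
  calc star P * P = star (star P * P) := by rw [star_mul, star_star]
    _ = P := by rw [star_mul_self, star_star]

theorem norm_spectralProjection_sub_le [IsProbabilityMeasure μ]
    (hU : Continuous fun g => (U g : A)) (hV : Continuous fun g => (V g : A)) :
    ‖spectralProjection μ χ U - spectralProjection μ χ V‖ ≤ ⨆ g, ‖(U g : A) - (V g : A)‖ := by
  have hbdd : BddAbove (Set.range fun g => ‖(U g : A) - (V g : A)‖) :=
    (isCompact_range (hU.sub hV).norm).bddAbove
  rw [spectralProjection, spectralProjection, ← integral_sub (integrable_inv_character_smul μ χ hU)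
    (integrable_inv_character_smul μ χ hV)]
  refine (norm_integral_le_of_norm_le_const (C := ⨆ g, ‖(U g : A) - (V g : A)‖)
    (Filter.Eventually.of_forall fun g => ?_)).trans_eq (by rw [probReal_univ, mul_one])
  rw [← smul_sub, norm_smul, Circle.norm_coe, one_mul]
  exact le_ciSup hbdd g

end SpectralProjection

theorem spectral_projection_vanishing_stable_cstar
    {G : Type*} [Group G] [TopologicalSpace G] [IsTopologicalGroup G] [CompactSpace G]
    [MeasurableSpace G] [BorelSpace G]
    (μ : Measure G) [μ.IsHaarMeasure] [IsProbabilityMeasure μ]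
    {A : Type*} [NormedRing A] [StarRing A] [CStarRing A] [NormedAlgebra ℂ A]
    [CompleteSpace A] [StarModule ℂ A]
    (χ : ContinuousMonoidHom G Circle)
    (U U' : G →* unitary A)
    (hU : Continuous fun g : G => (U g : A))
    (hU' : Continuous fun g : G => (U' g : A))
    (hclose : (⨆ g : G, ‖(U g : A) - (U' g : A)‖) < 1) :
    (∫ g, (((χ g)⁻¹ : Circle) : ℂ) • (U g : A) ∂μ) = 0 ↔
      (∫ g, (((χ g)⁻¹ : Circle) : ℂ) • (U' g : A) ∂μ) = 0 :=
  (isStarProjection_spectralProjection μ χ hU).eq_zero_iff_of_norm_sub_lt_one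
    (isStarProjection_spectralProjection μ χ hU')
    ((norm_spectralProjection_sub_le μ χ hU hU').trans_lt hclose)
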